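/- Let A be a unital C*-algebra, let e ∈ A be a projection, let u ∈ A be a unitary, and let 0 ≤ ε ≤ 1/2. Set b := e·u·e and c := b*·b + 1 − e. If ‖b*·b − e‖ ≤ ε, then ‖c − 1‖ ≤ ε, c is a positive invertible element, and ‖b·c^{−1/2} − b‖ ≤ ε. -/

import Mathlib

/-! `c = b⋆b + (1 - e)` is positive, and since `c - 1 = b⋆b - e` it is invertible with spectrum in
`[1 - ε, 1 + ε] ⊆ [1/2, 3/2]`. On `[1/2, ∞)` the map `x ↦ x^{-1/2}` moves points no further from
`1` than `x` itself, so `‖c^{-1/2} - 1‖ ≤ ε`; finally `‖b c^{-1/2} - b‖ ≤ ‖b‖ ‖c^{-1/2} - 1‖` with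
`‖b‖ = ‖e u e‖ ≤ 1`. -/

lemma Real.abs_inv_sqrt_sub_one_le {x : ℝ} (hx : 1 / 2 ≤ x) : |(√x)⁻¹ - 1| ≤ |x - 1| := by
  set s := √x
  have hs_pos : 0 < s := Real.sqrt_pos.mpr (by linarith)
  have hs_sq : s * s = x := Real.mul_self_sqrt (by linarith)
  have hs_half : 1 / 2 ≤ s := by nlinarith
  -- `|1/s - 1| = |s - 1| / s` and `|x - 1| = |s - 1| (s + 1)`, and `s (s + 1) ≥ 1` for `s ≥ 1/2`.
  have h_inv : s⁻¹ - 1 = (1 - s) / s := by field_simp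
  have h_sq : x - 1 = (s - 1) * (s + 1) := by rw [← hs_sq]; ring
  rw [h_inv, h_sq, abs_div, abs_mul, abs_sub_comm 1 s, abs_of_pos hs_pos,
    abs_of_pos (by linarith : 0 < s + 1), div_le_iff₀ hs_pos]
  nlinarith [abs_nonneg (s - 1)]

lemma spectrum.abs_sub_one_le_norm_sub_one {A : Type*} [NormedRing A] [NormedAlgebra ℝ A]
    [CompleteSpace A] [NormOneClass A] {a : A} {x : ℝ} (hx : x ∈ spectrum ℝ a) :
    |x - 1| ≤ ‖a - 1‖ := by
  have hx_sub : x - 1 ∈ spectrum ℝ (a - algebraMap ℝ A 1) := by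
    rw [← spectrum.sub_singleton_eq]
    exact Set.sub_mem_sub hx rfl
  rw [map_one] at hx_sub
  exact spectrum.norm_le_norm_of_mem hx_sub

lemma CFC.norm_rpow_neg_half_sub_one_le {A : Type*} [CStarAlgebra A] [PartialOrder A]
    [StarOrderedRing A] {a : A} {ε : ℝ} (ha : 0 ≤ a) (h : ‖a - 1‖ ≤ ε) (hε : ε ≤ 1 / 2) :
    ‖a ^ (-(1 / 2) : ℝ) - 1‖ ≤ ε := by
  obtain hA | hA := subsingleton_or_nontrivial A
  · rwa [Subsingleton.elim (a ^ (-(1 / 2) : ℝ) - 1) (a - 1)]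
  have hspec : ∀ x ∈ spectrum ℝ a, |x - 1| ≤ ε := fun x hx =>
    (spectrum.abs_sub_one_le_norm_sub_one hx).trans h
  have hspec_half : ∀ x ∈ spectrum ℝ a, 1 / 2 ≤ x := fun x hx => by
    linarith [(abs_le.mp (hspec x hx)).1]
  have hcont : ContinuousOn (fun x : ℝ => x ^ (-(1 / 2) : ℝ)) (spectrum ℝ a) :=
    continuousOn_id.rpow_const fun x hx => Or.inl (one_half_pos.trans_le (hspec_half x hx)).ne'
  rw [CFC.rpow_eq_cfc_real ha, ← cfc_one ℝ a, ← cfc_sub _ _ a hcont]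
  refine norm_cfc_le ((norm_nonneg _).trans h) fun x hx => ?_
  have hx_half := hspec_half x hx
  rw [Real.norm_eq_abs, Real.rpow_neg (by linarith), ← Real.sqrt_eq_rpow]
  exact (Real.abs_inv_sqrt_sub_one_le hx_half).trans (hspec x hx)

lemma norm_mul_mem_unitary_mul_le_one {A : Type*} [NormedRing A] [StarRing A] [CStarRing A]
    {e u : A} (he : IsStarProjection e) (hu : u ∈ unitary A) : ‖e * u * e‖ ≤ 1 :=
  calc ‖e * u * e‖ ≤ ‖e * u‖ * ‖e‖ := norm_mul_le _ _
    _ = ‖e‖ * ‖e‖ := by rw [CStarRing.norm_mul_mem_unitary e hu]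
    _ ≤ 1 := mul_le_one₀ he.norm_le (norm_nonneg e) he.norm_le

theorem compressed_polar_part_estimate_general {A : Type*} [CStarAlgebra A]
    [PartialOrder A] [StarOrderedRing A]
    (ε : ℝ) (hε : ε ≤ 1 / 2)
    (e : A) (he : IsSelfAdjoint e) (he2 : e * e = e)
    (u : A) (hu : u ∈ unitary A)
    (hb : ‖star (e * u * e) * (e * u * e) - e‖ ≤ ε) :
    ‖(star (e * u * e) * (e * u * e) + 1 - e) - 1‖ ≤ ε ∧
      0 ≤ star (e * u * e) * (e * u * e) + 1 - e ∧
      IsUnit (star (e * u * e) * (e * u * e) + 1 - e) ∧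
      ‖(e * u * e) * CFC.rpow (star (e * u * e) * (e * u * e) + 1 - e) (-(1 / 2) : ℝ)
        - (e * u * e)‖ ≤ ε := by
  have he_proj : IsStarProjection e := ⟨he2, he⟩
  set b := e * u * e
  set c := star b * b + 1 - e with hc
  have hc_norm : ‖c - 1‖ ≤ ε := by rwa [show c - 1 = star b * b - e by rw [hc]; abel]
  have hc_nonneg : 0 ≤ c := by
    rw [show c = star b * b + (1 - e) by rw [hc]; abel]
    exact add_nonneg (star_mul_self_nonneg b) he_proj.one_sub_nonneg
  have hc_unit : IsUnit c := by
    simpa using isUnit_one_sub_of_norm_lt_one (x := 1 - c) (by rw [norm_sub_rev]; linarith)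
  refine ⟨hc_norm, hc_nonneg, hc_unit, ?_⟩
  calc ‖b * c ^ (-(1 / 2) : ℝ) - b‖ = ‖b * (c ^ (-(1 / 2) : ℝ) - 1)‖ := by rw [mul_sub, mul_one]
    _ ≤ ‖b‖ * ‖c ^ (-(1 / 2) : ℝ) - 1‖ := norm_mul_le _ _
    _ ≤ 1 * ε := by
      gcongr
      · exact norm_mul_mem_unitary_mul_le_one he_proj hu
      · exact CFC.norm_rpow_neg_half_sub_one_le hc_nonneg hc_norm hε
    _ = ε := one_mul ε

/-- For a projection `e`, a unitary `u`, `b := e·u·e` and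
`c := b*·b + 1 − e`, if `‖b*·b − e‖ ≤ ε ≤ 1/2` then `‖c − 1‖ ≤ ε`, `c` is positive
invertible, and `‖b·c^{−1/2} − b‖ ≤ ε`. -/
theorem compressed_polar_part_estimate {A : Type*} [CStarAlgebra A]
    [PartialOrder A] [StarOrderedRing A]
    (ε : ℝ) (hε0 : 0 ≤ ε) (hε : ε ≤ 1 / 2)
    (e : A) (he : IsSelfAdjoint e) (he2 : e * e = e)
    (u : A) (hu : u ∈ unitary A)
    (hb : ‖star (e * u * e) * (e * u * e) - e‖ ≤ ε) :
    ‖(star (e * u * e) * (e * u * e) + 1 - e) - 1‖ ≤ ε ∧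
      0 ≤ star (e * u * e) * (e * u * e) + 1 - e ∧
      IsUnit (star (e * u * e) * (e * u * e) + 1 - e) ∧
      ‖(e * u * e) * CFC.rpow (star (e * u * e) * (e * u * e) + 1 - e) (-(1 / 2) : ℝ)
        - (e * u * e)‖ ≤ ε :=
  compressed_polar_part_estimate_general ε hε e he he2 u hu hb
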